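/- arXiv:1708.04281 — 7 statements merged into one kernel-verified Lean document; each statement's English description precedes it below -/
import Mathlib

section
/- For every t ∈ {0,…,T} and all x, y ∈ [0,∞), |v(t,x) − v(t,y)| ≤ |x − y|; in particular v(t,·) is Lipschitz continuous on [0,∞) with constant 1, and v(t,w+ε) ≤ v(t,w) + ε for every w ≥ 0 and ε > 0. -/
open MeasureTheory ProbabilityTheory Real

/-- Salary at integer time `t`: `L_t = L₀ · e^{μ_L t}`. -/
noncomputable def salary (L0 μL : ℝ) (t : ℕ) : ℝ := L0 * Real.exp (μL * t)

/-- The ABO `K_t = b · t · L_{t−1} · ä · e^{−r(T−t)}`. -/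
noncomputable def ABO (T : ℕ) (r b aT L0 μL : ℝ) (t : ℕ) : ℝ :=
  b * t * (L0 * Real.exp (μL * ((t : ℝ) - 1))) * aT * Real.exp (-r * ((T : ℝ) - (t : ℝ)))

/-- Auxiliary value function: `bermudanAux n w` is the value at time `t = T − n`
with `n` periods to go, defined by backward induction. -/
noncomputable def bermudanAux (T : ℕ) (r σ μL c b aT L0 : ℝ) : ℕ → ℝ → ℝ
  | 0, w => max (w - ABO T r b aT L0 μL T) 0
  | n + 1, w =>
      max (max (w - ABO T r b aT L0 μL (T - (n + 1))) 0)
        (Real.exp (-r) *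
          ∫ z, bermudanAux T r σ μL c b aT L0 n
              ((w + c * salary L0 μL (T - (n + 1))) * Real.exp (r - σ ^ 2 / 2 + σ * z))
            ∂(gaussianReal 0 1))

/-- The discrete-time value function of the Bermudan DB underpin option:
`v(T,w) = max(w − K_T, 0)` and for `t < T`,
`v(t,w) = max( max(w − K_t, 0), e^{−r} ∫ v(t+1, (w + c·L_t)·e^{r−σ²/2+σz}) γ(dz) )`. -/
noncomputable def bermudanValue (T : ℕ) (r σ μL c b aT L0 : ℝ) (t : ℕ) (w : ℝ) : ℝ :=
  bermudanAux T r σ μL c b aT L0 (T - t) w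

/-! Each step of the backward induction preserves 1-Lipschitz continuity in the wealth: the exercise
value `max (w - K) 0` is 1-Lipschitz, a maximum of 1-Lipschitz functions is 1-Lipschitz, and the
continuation value is 1-Lipschitz because the discounted growth factor `e^{-r} e^{r - σ²/2 + σZ}`
has mean one. -/

theorem integral_exp_add_mul_gaussianReal (μ : ℝ) (v : NNReal) (a t : ℝ) :
    ∫ x, rexp (a + t * x) ∂gaussianReal μ v = rexp (a + μ * t + v * t ^ 2 / 2) := by
  simp_rw [Real.exp_add a, integral_const_mul]
  rw [← mgf, mgf_fun_id_gaussianReal, ← Real.exp_add, add_assoc]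

theorem LipschitzWith.integrable_comp {α E F : Type*} [MeasurableSpace α] {ν : Measure α}
    [IsFiniteMeasure ν] [NormedAddCommGroup E] [NormedAddCommGroup F] {K : NNReal} {f : E → F}
    (hf : LipschitzWith K f) {g : α → E} (hg : Integrable g ν) :
    Integrable (fun z => f (g z)) ν := by
  refine ((integrable_const ‖f 0‖).add (hg.norm.const_mul K)).mono'
    (hf.continuous.comp_aestronglyMeasurable hg.1) (ae_of_all _ fun z => ?_)
  have h := hf.norm_sub_le (g z) 0
  rw [sub_zero] at h
  simp only [Pi.add_apply]
  linarith [norm_le_insert' (f (g z)) (f 0)]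

-- No positivity of `∫ M` is needed: if it vanishes, the function is `0⁻¹ * _ = 0`.
theorem LipschitzWith.inv_integral_mul_integral_comp_mul {α : Type*} [MeasurableSpace α]
    {ν : Measure α} [IsFiniteMeasure ν] {K : NNReal} {f : ℝ → ℝ} (hf : LipschitzWith K f)
    {M : α → ℝ} (hM : Integrable M ν) (hM0 : ∀ z, 0 ≤ M z) :
    LipschitzWith K fun w => (∫ z, M z ∂ν)⁻¹ * ∫ z, f (w * M z) ∂ν := by
  have hint (w : ℝ) : Integrable (fun z => f (w * M z)) ν := hf.integrable_comp (hM.const_mul w)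
  refine LipschitzWith.of_dist_le_mul fun x y => ?_
  have hpoint (z : α) : |f (x * M z) - f (y * M z)| ≤ K * |x - y| * M z := by
    have := hf.dist_le_mul (x * M z) (y * M z)
    rwa [Real.dist_eq, Real.dist_eq, ← sub_mul, abs_mul, abs_of_nonneg (hM0 z), ← mul_assoc]
      at this
  have hm0 : 0 ≤ ∫ z, M z ∂ν := integral_nonneg hM0
  calc dist ((∫ z, M z ∂ν)⁻¹ * ∫ z, f (x * M z) ∂ν) ((∫ z, M z ∂ν)⁻¹ * ∫ z, f (y * M z) ∂ν)
      = (∫ z, M z ∂ν)⁻¹ * |∫ z, f (x * M z) - f (y * M z) ∂ν| := by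
        rw [Real.dist_eq, ← mul_sub, abs_mul, abs_inv, abs_of_nonneg hm0,
          integral_sub (hint x) (hint y)]
    _ ≤ (∫ z, M z ∂ν)⁻¹ * ∫ z, K * |x - y| * M z ∂ν := by
        gcongr
        exact abs_integral_le_integral_abs.trans
          (integral_mono ((hint x).sub (hint y)).abs (hM.const_mul _) hpoint)
    _ = ((∫ z, M z ∂ν)⁻¹ * ∫ z, M z ∂ν) * (K * dist x y) := by
        rw [integral_const_mul, Real.dist_eq]
        ring
    _ ≤ K * dist x y := mul_le_of_le_one_left (by positivity) inv_mul_le_one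

theorem LipschitzWith.exp_neg_mul_integral_comp_mul_exp_gaussianReal {K : NNReal} {f : ℝ → ℝ}
    (hf : LipschitzWith K f) (r σ : ℝ) :
    LipschitzWith K fun w =>
      rexp (-r) * ∫ z, f (w * rexp (r - σ ^ 2 / 2 + σ * z)) ∂gaussianReal 0 1 := by
  have hmean : ∫ z, rexp (r - σ ^ 2 / 2 + σ * z) ∂gaussianReal 0 1 = rexp r := by
    rw [integral_exp_add_mul_gaussianReal]
    push_cast
    ring_nf
  have hM : Integrable (fun z => rexp (r - σ ^ 2 / 2 + σ * z)) (gaussianReal 0 1) :=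
    Integrable.of_integral_ne_zero (hmean ▸ (exp_pos r).ne')
  simpa only [hmean, Real.exp_neg] using
    hf.inv_integral_mul_integral_comp_mul hM fun z => (exp_pos _).le

theorem lipschitzWith_bermudanAux (T : ℕ) (r σ μL c b aT L0 : ℝ) (n : ℕ) :
    LipschitzWith 1 (bermudanAux T r σ μL c b aT L0 n) := by
  have hexercise (K : ℝ) : LipschitzWith 1 fun w : ℝ => max (w - K) 0 := by
    simpa only [sub_eq_add_neg] using (isometry_add_right (-K)).lipschitz.max_const 0
  induction n with
  | zero => exact hexercise _
  | succ n ih =>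
    have hcontinuation := (ih.exp_neg_mul_integral_comp_mul_exp_gaussianReal r σ).comp
      (isometry_add_right (c * salary L0 μL (T - (n + 1)))).lipschitz
    have h := (hexercise (ABO T r b aT L0 μL (T - (n + 1)))).max hcontinuation
    rw [mul_one, max_self] at h
    exact h

theorem bermudanValue_lipschitz_general (T : ℕ) (r σ μL c b aT L0 : ℝ) (t : ℕ) :
    (∀ x y : ℝ, 0 ≤ x → 0 ≤ y →
      |bermudanValue T r σ μL c b aT L0 t x - bermudanValue T r σ μL c b aT L0 t y| ≤ |x - y|) ∧
    (∀ w : ℝ, 0 ≤ w → ∀ ε : ℝ, 0 < ε →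
      bermudanValue T r σ μL c b aT L0 t (w + ε) ≤ bermudanValue T r σ μL c b aT L0 t w + ε) := by
  have hlip (x y : ℝ) :
      |bermudanValue T r σ μL c b aT L0 t x - bermudanValue T r σ μL c b aT L0 t y| ≤ |x - y| := by
    simpa only [bermudanValue, NNReal.coe_one, one_mul, Real.dist_eq] using
      (lipschitzWith_bermudanAux T r σ μL c b aT L0 (T - t)).dist_le_mul x y
  refine ⟨fun x y _ _ => hlip x y, fun w _ ε hε => ?_⟩
  have h := le_of_abs_le (hlip (w + ε) w)
  rw [add_sub_cancel_left, abs_of_pos hε] at h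
  linarith

/-- For every `t ∈ {0,…,T}` and `x, y ∈ [0,∞)`, `|v(t,x) − v(t,y)| ≤ |x − y|`
(`v(t,·)` is 1-Lipschitz on `[0,∞)`), and `v(t,w+ε) ≤ v(t,w) + ε` for `w ≥ 0`, `ε > 0`. -/
theorem bermudanValue_lipschitz (T : ℕ) (hT : 1 ≤ T) (r σ μL c b aT L0 : ℝ)
    (hr : 0 ≤ r) (hσ : 0 < σ) (hμL : 0 ≤ μL) (hc : 0 < c) (hb : 0 < b)
    (haT : 0 < aT) (hL0 : 0 < L0) (t : ℕ) (ht : t ≤ T) :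
    (∀ x y : ℝ, 0 ≤ x → 0 ≤ y →
      |bermudanValue T r σ μL c b aT L0 t x - bermudanValue T r σ μL c b aT L0 t y| ≤ |x - y|) ∧
    (∀ w : ℝ, 0 ≤ w → ∀ ε : ℝ, 0 < ε →
      bermudanValue T r σ μL c b aT L0 t (w + ε) ≤ bermudanValue T r σ μL c b aT L0 t w + ε) :=
  bermudanValue_lipschitz_general T r σ μL c b aT L0 t
end

section
/- For every t ∈ {0,…,T}, the map w ↦ v(t,w) is convex on [0,∞): for all w₁, w₂ ∈ [0,∞) and λ ∈ [0,1], v(t, λw₁ + (1−λ)w₂) ≤ λ·v(t,w₁) + (1−λ)·v(t,w₂). -/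
/-!
By backward induction, each `v(t, ·)` is convex and Lipschitz on all of `ℝ`. The exercise
payoff `max (w - K) 0` is both; the continuation value is `e^{-r}` times an expectation of
`v(t+1, (w + a) X)` with `X > 0` lognormal, an average of convex functions of `w`, hence
convex, and Lipschitz with constant `e^{-r} K 𝔼 X`; a maximum of two such functions is again
such a function. Lipschitz continuity is only carried along to make these expectations
integrable, so that convexity passes through the integral.
-/

open MeasureTheory ProbabilityTheory Real

open scoped NNReal

lemma convexOn_max_sub_const_zero (K : ℝ) : ConvexOn ℝ Set.univ (fun w : ℝ => max (w - K) 0) :=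
  ((convexOn_id convex_univ).sub (concaveOn_const K convex_univ)).sup (convexOn_const 0 convex_univ)

lemma lipschitzWith_max_sub_const_zero (K : ℝ) : LipschitzWith 1 (fun w : ℝ => max (w - K) 0) :=
  (LipschitzWith.of_le_add fun x y => by
    rw [Real.dist_eq]; linarith [le_abs_self (x - y)]).max_const 0

section Continuation

variable {α : Type*} [MeasurableSpace α] {μ : Measure α} {X : α → ℝ} {v : ℝ → ℝ} {K : ℝ≥0}

noncomputable def continuationValue (μ : Measure α) (X : α → ℝ) (δ a : ℝ) (v : ℝ → ℝ) (w : ℝ) : ℝ :=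
  δ * ∫ z, v ((w + a) * X z) ∂μ

lemma LipschitzWith.integrable_comp_mul [IsFiniteMeasure μ] (hv : LipschitzWith K v)
    (hX : Integrable X μ) (c : ℝ) : Integrable (fun z => v (c * X z)) μ := by
  refine Integrable.mono' ((integrable_const |v 0|).add ((hX.abs.const_mul (K * |c|))))
    (hv.continuous.comp_aestronglyMeasurable (hX.aestronglyMeasurable.const_mul c))
    (Filter.Eventually.of_forall fun z => ?_)
  have h := hv.dist_le_mul (c * X z) 0
  rw [Real.dist_eq, Real.dist_eq, sub_zero, abs_mul] at h
  rw [Real.norm_eq_abs]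
  calc |v (c * X z)| ≤ |v 0| + |v (c * X z) - v 0| := by
        linarith [abs_sub_abs_le_abs_sub (v (c * X z)) (v 0)]
    _ ≤ |v 0| + K * |c| * |X z| := by linarith

lemma convexOn_continuationValue (hv : ConvexOn ℝ Set.univ v)
    (hint : ∀ c, Integrable (fun z => v (c * X z)) μ) {δ : ℝ} (hδ : 0 ≤ δ) (a : ℝ) :
    ConvexOn ℝ Set.univ (continuationValue μ X δ a v) := by
  have hG : ConvexOn ℝ Set.univ (fun c => ∫ z, v (c * X z) ∂μ) :=
    integral_convexOn_of_integrand_ae convex_univ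
      (Filter.Eventually.of_forall fun z => hv.comp_linearMap (LinearMap.id.smulRight (X z)))
      fun c _ => hint c
  have h := (hG.translate_right a).smul hδ
  rw [Set.preimage_univ] at h
  refine h.congr fun w _ => ?_
  simp only [continuationValue, Function.comp_apply, smul_eq_mul, add_comm a]

lemma lipschitzWith_continuationValue [IsFiniteMeasure μ] (hv : LipschitzWith K v)
    (hX : Integrable X μ) {δ : ℝ} (hδ : 0 ≤ δ) (a : ℝ) :
    LipschitzWith (Real.toNNReal (δ * (K * ∫ z, |X z| ∂μ)))
      (continuationValue μ X δ a v) := by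
  refine LipschitzWith.of_le_add_mul' _ fun x y => ?_
  have hpt : ∀ z, v ((x + a) * X z) ≤ v ((y + a) * X z) + K * |X z| * dist x y := fun z => by
    have h := hv.le_add_mul ((x + a) * X z) ((y + a) * X z)
    rwa [Real.dist_eq, ← sub_mul, abs_mul, add_sub_add_right_eq_sub, ← Real.dist_eq,
      mul_comm (dist x y), ← mul_assoc] at h
  have hint := hv.integrable_comp_mul hX
  have hmono : ∫ z, v ((x + a) * X z) ∂μ ≤
      ∫ z, v ((y + a) * X z) ∂μ + K * (∫ z, |X z| ∂μ) * dist x y := by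
    calc ∫ z, v ((x + a) * X z) ∂μ ≤ ∫ z, (v ((y + a) * X z) + K * |X z| * dist x y) ∂μ :=
          integral_mono (hint _) ((hint _).add ((hX.abs.const_mul _).mul_const _)) hpt
      _ = _ := by
          rw [integral_add (hint _) ((hX.abs.const_mul _).mul_const _), integral_mul_const,
            integral_const_mul]
  calc continuationValue μ X δ a v x
      ≤ δ * (∫ z, v ((y + a) * X z) ∂μ + K * (∫ z, |X z| ∂μ) * dist x y) :=
        mul_le_mul_of_nonneg_left hmono hδ
    _ = continuationValue μ X δ a v y + δ * (K * ∫ z, |X z| ∂μ) * dist x y := by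
        rw [continuationValue]; ring

end Continuation

lemma integrable_exp_add_mul_gaussianReal (μ : ℝ) (v : ℝ≥0) (m s : ℝ) :
    Integrable (fun z => exp (m + s * z)) (gaussianReal μ v) :=
  ((integrable_exp_mul_gaussianReal s).const_mul (exp m)).congr
    (ae_of_all _ fun z => (exp_add m (s * z)).symm)

lemma bermudanAux_succ (T : ℕ) (r σ μL c b aT L0 : ℝ) (n : ℕ) :
    bermudanAux T r σ μL c b aT L0 (n + 1) = fun w =>
      max (max (w - ABO T r b aT L0 μL (T - (n + 1))) 0)
        (continuationValue (gaussianReal 0 1) (fun z => exp (r - σ ^ 2 / 2 + σ * z)) (exp (-r))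
          (c * salary L0 μL (T - (n + 1))) (bermudanAux T r σ μL c b aT L0 n) w) :=
  rfl

lemma convexOn_bermudanAux_and_lipschitzWith (T : ℕ) (r σ μL c b aT L0 : ℝ) (n : ℕ) :
    ConvexOn ℝ Set.univ (bermudanAux T r σ μL c b aT L0 n) ∧
      ∃ K, LipschitzWith K (bermudanAux T r σ μL c b aT L0 n) := by
  induction n with
  | zero => exact ⟨convexOn_max_sub_const_zero _, 1, lipschitzWith_max_sub_const_zero _⟩
  | succ n ih =>
    obtain ⟨hconv, K, hlip⟩ := ih
    have hX := integrable_exp_add_mul_gaussianReal 0 1 (r - σ ^ 2 / 2) σ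
    rw [bermudanAux_succ]
    exact ⟨(convexOn_max_sub_const_zero _).sup
        (convexOn_continuationValue hconv (hlip.integrable_comp_mul hX) (exp_pos _).le _),
      _, (lipschitzWith_max_sub_const_zero _).max
        (lipschitzWith_continuationValue hlip hX (exp_pos _).le _)⟩

theorem bermudanValue_convex_general (T : ℕ) (r σ μL c b aT L0 : ℝ) (t : ℕ)
    (w₁ w₂ : ℝ) (lam : ℝ) (hlam0 : 0 ≤ lam) (hlam1 : lam ≤ 1) :
    bermudanValue T r σ μL c b aT L0 t (lam * w₁ + (1 - lam) * w₂) ≤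
      lam * bermudanValue T r σ μL c b aT L0 t w₁
        + (1 - lam) * bermudanValue T r σ μL c b aT L0 t w₂ := by
  have h := (convexOn_bermudanAux_and_lipschitzWith T r σ μL c b aT L0 (T - t)).1.2
    (Set.mem_univ w₁) (Set.mem_univ w₂) hlam0 (sub_nonneg.2 hlam1) (add_sub_cancel lam 1)
  simpa only [bermudanValue, smul_eq_mul] using h

/-- For every `t ∈ {0,…,T}`, the map `w ↦ v(t,w)` is convex on `[0,∞)`. -/
theorem bermudanValue_convex (T : ℕ) (hT : 1 ≤ T) (r σ μL c b aT L0 : ℝ)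
    (hr : 0 ≤ r) (hσ : 0 < σ) (hμL : 0 ≤ μL) (hc : 0 < c) (hb : 0 < b)
    (haT : 0 < aT) (hL0 : 0 < L0) (t : ℕ) (ht : t ≤ T)
    (w₁ w₂ : ℝ) (hw₁ : 0 ≤ w₁) (hw₂ : 0 ≤ w₂) (lam : ℝ) (hlam0 : 0 ≤ lam) (hlam1 : lam ≤ 1) :
    bermudanValue T r σ μL c b aT L0 t (lam * w₁ + (1 - lam) * w₂) ≤
      lam * bermudanValue T r σ μL c b aT L0 t w₁
        + (1 - lam) * bermudanValue T r σ μL c b aT L0 t w₂ :=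
  bermudanValue_convex_general T r σ μL c b aT L0 t w₁ w₂ lam hlam0 hlam1
end

section
/- Existence and uniqueness of the crossing time: assume r > 0, μ_L ≥ 0, b, ä, L₀ > 0, T > 0, and c > b·ä·e^{−rT}. Then there exists a unique t' > 0 such that f(t') = 0, where f(s) = (s+1)·b·L₀·e^{μ_L s}·ä·e^{−r(T−s)} − s·b·L₀·e^{μ_L (s−1)}·ä·e^{−r(T−s)} − c·L₀·e^{μ_L s}; moreover f(s) < 0 for all s ∈ [0, t'), f(s) > 0 for all s > t', and t' ≤ (1/r)·ln( c/(b·ä·e^{−rT}) ). -/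
/-!
Dividing by the positive salary factor `L₀ e^{μ_L s}`, `f(s)` has the sign of
`g(s) = A e^{rs} (1 + (1 - e^{-μ_L}) s) - c` with `A = b ä e^{-rT}`. On `[0, ∞)` this is a
product of two increasing positive factors minus a constant, hence strictly increasing, with
`g(0) = A - c < 0` and `g(s₀) = c (1 - e^{-μ_L}) s₀ ≥ 0` at `s₀ = (1/r) ln(c/A)`, where
`A e^{r s₀} = c`. The intermediate value theorem yields the unique crossing `t' ∈ (0, s₀]`.
-/

open Real

/-- The boundary-classifying function
`f(s) = (s+1)·b·L₀·e^{μ_L s}·ä·e^{−r(T−s)} − s·b·L₀·e^{μ_L(s−1)}·ä·e^{−r(T−s)} − c·L₀·e^{μ_L s}`,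
the asymptotic excess of exercise value over continuation value at time `s`. -/
noncomputable def boundaryFun (T r μL c b aT L0 : ℝ) (s : ℝ) : ℝ :=
  (s + 1) * b * (L0 * Real.exp (μL * s)) * aT * Real.exp (-r * (T - s))
    - s * b * (L0 * Real.exp (μL * (s - 1))) * aT * Real.exp (-r * (T - s))
    - c * (L0 * Real.exp (μL * s))

open Set

theorem StrictMonoOn.exists_zero_sign_change {g : ℝ → ℝ} {a b : ℝ}
    (hg : StrictMonoOn g (Ici a)) (hcont : ContinuousOn g (Icc a b)) (hab : a ≤ b)
    (ha : g a < 0) (hb : 0 ≤ g b) :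
    ∃ t ∈ Ioc a b, g t = 0 ∧ (∀ s ∈ Ico a t, g s < 0) ∧ ∀ s, t < s → 0 < g s := by
  obtain ⟨t, ⟨hat, htb⟩, hgt⟩ := intermediate_value_Icc hab hcont ⟨ha.le, hb⟩
  have hat' : a < t := hat.lt_of_ne (by rintro rfl; exact ha.ne hgt)
  refine ⟨t, ⟨hat', htb⟩, hgt, fun s ⟨has, hst⟩ => ?_, fun s hts => ?_⟩
  · exact hgt ▸ hg has hat hst
  · exact hgt ▸ hg hat (hat.trans hts.le) hts

noncomputable def reducedBoundaryFun (A k r c s : ℝ) : ℝ :=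
  A * exp (r * s) * (1 + k * s) - c

theorem boundaryFun_eq_mul (T r μL c b aT L0 s : ℝ) :
    boundaryFun T r μL c b aT L0 s = L0 * exp (μL * s) *
      reducedBoundaryFun (b * aT * exp (-r * T)) (1 - exp (-μL)) r c s := by
  rw [boundaryFun, reducedBoundaryFun, show μL * (s - 1) = μL * s + -μL by ring, exp_add,
    show -r * (T - s) = -r * T + r * s by ring, exp_add]
  ring

theorem continuous_reducedBoundaryFun (A k r c : ℝ) :
    Continuous (reducedBoundaryFun A k r c) := by
  unfold reducedBoundaryFun
  fun_prop

theorem reducedBoundaryFun_zero (A k r c : ℝ) : reducedBoundaryFun A k r c 0 = A - c := by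
  simp [reducedBoundaryFun]

theorem strictMonoOn_reducedBoundaryFun {A k r : ℝ} (c : ℝ) (hA : 0 < A) (hk : 0 ≤ k)
    (hr : 0 < r) : StrictMonoOn (reducedBoundaryFun A k r c) (Ici 0) := by
  intro x (hx : 0 ≤ x) y _ hxy
  have hkx : 0 < 1 + k * x := by positivity
  have hexp : exp (r * x) < exp (r * y) := exp_lt_exp.2 (mul_lt_mul_of_pos_left hxy hr)
  have hlin : 1 + k * x ≤ 1 + k * y := by gcongr
  unfold reducedBoundaryFun
  gcongr ?_ - c
  calc A * exp (r * x) * (1 + k * x) < A * exp (r * y) * (1 + k * x) := by gcongr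
    _ ≤ A * exp (r * y) * (1 + k * y) := by gcongr

theorem one_div_mul_log_div_nonneg {A r c : ℝ} (hA : 0 < A) (hAc : A ≤ c) (hr : 0 < r) :
    0 ≤ (1 / r) * log (c / A) :=
  mul_nonneg (one_div_pos.2 hr).le (log_nonneg ((one_le_div hA).2 hAc))

theorem reducedBoundaryFun_log_div_nonneg {A k r c : ℝ} (hA : 0 < A) (hAc : A ≤ c)
    (hk : 0 ≤ k) (hr : 0 < r) :
    0 ≤ reducedBoundaryFun A k r c ((1 / r) * log (c / A)) := by
  set s₀ := (1 / r) * log (c / A)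
  have hs₀ : 0 ≤ s₀ := one_div_mul_log_div_nonneg hA hAc hr
  have hexp : A * exp (r * s₀) = c := by
    rw [← mul_assoc, mul_one_div_cancel hr.ne', one_mul,
      exp_log (div_pos (hA.trans_le hAc) hA), mul_div_cancel₀ _ hA.ne']
  rw [reducedBoundaryFun, hexp, show c * (1 + k * s₀) - c = c * k * s₀ by ring]
  exact mul_nonneg (mul_nonneg (hA.le.trans hAc) hk) hs₀

theorem boundary_crossing_time_general (T r μL c b aT L0 : ℝ)
    (hr : 0 < r) (hμL : 0 ≤ μL) (hb : 0 < b) (haT : 0 < aT) (hL0 : 0 < L0)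
    (hc : b * aT * Real.exp (-r * T) < c) :
    ∃ t' : ℝ, 0 < t' ∧ boundaryFun T r μL c b aT L0 t' = 0 ∧
      (∀ s : ℝ, 0 < s → boundaryFun T r μL c b aT L0 s = 0 → s = t') ∧
      (∀ s : ℝ, 0 ≤ s → s < t' → boundaryFun T r μL c b aT L0 s < 0) ∧
      (∀ s : ℝ, t' < s → 0 < boundaryFun T r μL c b aT L0 s) ∧
      t' ≤ (1 / r) * Real.log (c / (b * aT * Real.exp (-r * T))) := by
  set A := b * aT * exp (-r * T)
  have hA : 0 < A := by positivity
  have hk : 0 ≤ 1 - exp (-μL) := sub_nonneg.2 (exp_le_one_iff.2 (neg_nonpos.2 hμL))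
  obtain ⟨t, ⟨ht, hts₀⟩, hzero, hneg, hpos⟩ :=
    (strictMonoOn_reducedBoundaryFun c hA hk hr).exists_zero_sign_change
    (continuous_reducedBoundaryFun _ _ _ _).continuousOn
    (one_div_mul_log_div_nonneg hA hc.le hr)
    (by rw [reducedBoundaryFun_zero]; linarith) (reducedBoundaryFun_log_div_nonneg hA hc.le hk hr)
  have hf_neg : ∀ s ∈ Ico 0 t, boundaryFun T r μL c b aT L0 s < 0 := fun s hs => by
    rw [boundaryFun_eq_mul]; exact mul_neg_of_pos_of_neg (by positivity) (hneg s hs)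
  have hf_pos : ∀ s, t < s → 0 < boundaryFun T r μL c b aT L0 s := fun s hs => by
    rw [boundaryFun_eq_mul]; exact mul_pos (by positivity) (hpos s hs)
  refine ⟨t, ht, by rw [boundaryFun_eq_mul, hzero, mul_zero], fun s hs hfs => ?_,
    fun s hs hst => hf_neg s ⟨hs, hst⟩, hf_pos, hts₀⟩
  rcases lt_trichotomy s t with hst | hst | hst
  · exact absurd hfs (hf_neg s ⟨hs.le, hst⟩).ne
  · exact hst
  · exact absurd hfs (hf_pos s hst).ne'

/-- Existence and uniqueness of the crossing time: if `r > 0`, `μ_L ≥ 0`,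
`b, ä, L₀ > 0`, `T > 0` and `c > b·ä·e^{−rT}`, then there is a unique `t' > 0`
with `f(t') = 0`; moreover `f < 0` on `[0, t')`, `f > 0` on `(t', ∞)`, and
`t' ≤ (1/r)·ln(c/(b·ä·e^{−rT}))`. -/
theorem boundary_crossing_time (T r μL c b aT L0 : ℝ)
    (hr : 0 < r) (hμL : 0 ≤ μL) (hb : 0 < b) (haT : 0 < aT) (hL0 : 0 < L0)
    (hT : 0 < T) (hc : b * aT * Real.exp (-r * T) < c) :
    ∃ t' : ℝ, 0 < t' ∧ boundaryFun T r μL c b aT L0 t' = 0 ∧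
      (∀ s : ℝ, 0 < s → boundaryFun T r μL c b aT L0 s = 0 → s = t') ∧
      (∀ s : ℝ, 0 ≤ s → s < t' → boundaryFun T r μL c b aT L0 s < 0) ∧
      (∀ s : ℝ, t' < s → 0 < boundaryFun T r μL c b aT L0 s) ∧
      t' ≤ (1 / r) * Real.log (c / (b * aT * Real.exp (-r * T))) :=
  boundary_crossing_time_general T r μL c b aT L0 hr hμL hb haT hL0 hc
end

section
/- If b, ä, L₀ > 0, μ_L ≥ 0, T ≥ 1 is an integer, r ∈ ℝ, and c > b·ä·((1 − e^{−μ_L})·T + e^{−μ_L})·e^{−r}, then T·b·L_{T−1}·ä·e^{−r} − (T−1)·b·L_{T−2}·ä·e^{−r} − c·L_{T−1} < 0, where L_t = L₀·e^{μ_L t}. (That is, f(T−1) < 0, so exercise is never optimal before retirement and the Bermudan DB underpin option reduces to the ordinary DB underpin option; Proposition 3 part (iv).) -/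
open Real

theorem exp_mul_sub_two (μ t : ℝ) : exp (μ * (t - 2)) = exp (μ * (t - 1)) * exp (-μ) := by
  rw [← exp_add]
  ring_nf

theorem exercise_excess_eq (t r μ c b a L0 : ℝ) :
    t * b * (L0 * exp (μ * (t - 1))) * a * exp (-r)
      - (t - 1) * b * (L0 * exp (μ * (t - 2))) * a * exp (-r)
      - c * (L0 * exp (μ * (t - 1)))
    = L0 * exp (μ * (t - 1)) * (b * a * ((1 - exp (-μ)) * t + exp (-μ)) * exp (-r) - c) := by
  rw [exp_mul_sub_two]
  ring

theorem no_early_exercise_condition_general (T : ℕ) (r μL c b aT L0 : ℝ)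
    (hL0 : 0 < L0)
    (hc : b * aT * ((1 - Real.exp (-μL)) * (T : ℝ) + Real.exp (-μL)) * Real.exp (-r) < c) :
    (T : ℝ) * b * (L0 * Real.exp (μL * ((T : ℝ) - 1))) * aT * Real.exp (-r)
      - ((T : ℝ) - 1) * b * (L0 * Real.exp (μL * ((T : ℝ) - 2))) * aT * Real.exp (-r)
      - c * (L0 * Real.exp (μL * ((T : ℝ) - 1))) < 0 := by
  rw [exercise_excess_eq]
  exact mul_neg_of_pos_of_neg (by positivity) (sub_neg.mpr hc)

/-- If `c > b·ä·((1 − e^{−μ_L})·T + e^{−μ_L})·e^{−r}` then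
`T·b·L_{T−1}·ä·e^{−r} − (T−1)·b·L_{T−2}·ä·e^{−r} − c·L_{T−1} < 0`, where
`L_t = L₀·e^{μ_L t}`; i.e. `f(T−1) < 0`, so exercise is never optimal before
retirement and the Bermudan DB underpin reduces to the ordinary DB underpin. -/
theorem no_early_exercise_condition (T : ℕ) (hT : 1 ≤ T) (r μL c b aT L0 : ℝ)
    (hμL : 0 ≤ μL) (hb : 0 < b) (haT : 0 < aT) (hL0 : 0 < L0)
    (hc : b * aT * ((1 - Real.exp (-μL)) * (T : ℝ) + Real.exp (-μL)) * Real.exp (-r) < c) :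
    (T : ℝ) * b * (L0 * Real.exp (μL * ((T : ℝ) - 1))) * aT * Real.exp (-r)
      - ((T : ℝ) - 1) * b * (L0 * Real.exp (μL * ((T : ℝ) - 2))) * aT * Real.exp (-r)
      - c * (L0 * Real.exp (μL * ((T : ℝ) - 1))) < 0 :=
  no_early_exercise_condition_general T r μL c b aT L0 hL0 hc
end

section
/- Obstruction to early exercise in the continuous-time formulation: let r ≥ 0, b, ä > 0, T > 0 and suppose c > b·ä·(1 + rT). Then for every t ∈ [0,T], b·ä·e^{−r(T−t)}·(1 + r·t) < c; that is, the function f(t) = b·ä·e^{−r(T−t)} + r·t·b·ä·e^{−r(T−t)} − c is strictly negative on all of [0,T]. (Consequently the variational inequality cannot hold with the exercise payoff anywhere, the continuation region is everything, and the Bermudan DB underpin option is equivalent to the European DB underpin option.) -/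
open Real

theorem exp_neg_mul_sub_mul_one_add_mul_le {r t T : ℝ} (hr : 0 ≤ r) (ht : 0 ≤ t) (htT : t ≤ T) :
    Real.exp (-r * (T - t)) * (1 + r * t) ≤ 1 + r * T := by
  have hdiscount : Real.exp (-r * (T - t)) ≤ 1 :=
    Real.exp_le_one_iff.mpr (by nlinarith)
  have hgrowth : 0 ≤ 1 + r * t := by positivity
  calc Real.exp (-r * (T - t)) * (1 + r * t)
      ≤ 1 + r * t := mul_le_of_le_one_left hgrowth hdiscount
    _ ≤ 1 + r * T := by gcongr

theorem continuous_no_early_exercise_general (r c b aT T : ℝ)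
    (hr : 0 ≤ r) (hb : 0 < b) (haT : 0 < aT)
    (hc : b * aT * (1 + r * T) < c) :
    ∀ t : ℝ, 0 ≤ t → t ≤ T → b * aT * Real.exp (-r * (T - t)) * (1 + r * t) < c := by
  intro t ht htT
  calc b * aT * Real.exp (-r * (T - t)) * (1 + r * t)
      = b * aT * (Real.exp (-r * (T - t)) * (1 + r * t)) := by ring
    _ ≤ b * aT * (1 + r * T) := by
        gcongr
        exact exp_neg_mul_sub_mul_one_add_mul_le hr ht htT
    _ < c := hc

/-- Obstruction to early exercise in the continuous-time formulation: if
`r ≥ 0`, `b, ä > 0`, `T > 0` and `c > b·ä·(1 + rT)`, then for every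
`t ∈ [0,T]`, `b·ä·e^{−r(T−t)}·(1 + r·t) < c`; that is,
`f(t) = b·ä·e^{−r(T−t)} + r·t·b·ä·e^{−r(T−t)} − c < 0` on all of `[0,T]`,
so the continuation region is everything and the Bermudan DB underpin option
is equivalent to the European DB underpin option. -/
theorem continuous_no_early_exercise (r c b aT T : ℝ)
    (hr : 0 ≤ r) (hb : 0 < b) (haT : 0 < aT) (hT : 0 < T)
    (hc : b * aT * (1 + r * T) < c) :
    ∀ t : ℝ, 0 ≤ t → t ≤ T → b * aT * Real.exp (-r * (T - t)) * (1 + r * t) < c :=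
  continuous_no_early_exercise_general r c b aT T hr hb haT hc
end

section
/- Optimal switching time for the Florida second election option (stochastic salary, continuous time): let r > 0, b, ä, c > 0 and 0 ≤ t ≤ T. Define g : [t,T] → ℝ by g(s) = c·(s − t) − s·b·ä·e^{−r(T−s)}. Suppose t' ≥ 0 satisfies c = b·ä·e^{−r(T−t')}·(1 + r·t'). Then s* = max(min(T, t'), t) maximizes g on [t,T]: g(s*) ≥ g(s) for all s ∈ [t,T]. -/
open Real Set

/-! Writing `h(s) = b·ä·e^{−r(T−s)}·(1 + r·s)`, the gain `g` has derivative `c − h(s)`, and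
`h` is increasing on `[0, ∞)`. Since `h(t') = c`, `g` increases on `[t, s*]` and decreases on
`[s*, T]`. -/

lemma max_min_le_of_lt {t T t' x : ℝ} (h : x < max (min T t') t) (hx : t ≤ x) :
    max (min T t') t ≤ t' := by
  rcases le_total (min T t') t with h' | h'
  · rw [max_eq_right h'] at h ⊢
    exact absurd hx (not_le.2 h)
  · rw [max_eq_left h']
    exact min_le_right _ _

lemma le_max_min_of_lt {t T t' x : ℝ} (h : max (min T t') t < x) (hx : x ≤ T) :
    t' ≤ max (min T t') t := by
  have hmin : min T t' < T := (le_max_left _ _).trans_lt (h.trans_le hx)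
  have ht'T : t' < T := (min_lt_iff.1 hmin).resolve_left (lt_irrefl T)
  exact (min_eq_right ht'T.le).symm.le.trans (le_max_left _ _)

lemma isMaxOn_Icc_of_hasDerivAt_sign {f f' : ℝ → ℝ} {a b m : ℝ}
    (hf : ∀ x, HasDerivAt f (f' x) x)
    (hinc : ∀ x ∈ Ioo a m, 0 ≤ f' x) (hdec : ∀ x ∈ Ioo m b, f' x ≤ 0) :
    IsMaxOn f (Icc a b) m := by
  have hcont : Continuous f := continuous_iff_continuousAt.2 fun x => (hf x).continuousAt
  have hderiv : ∀ D : Set ℝ, ∀ x ∈ interior D, HasDerivWithinAt f (f' x) (interior D) x :=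
    fun _ x _ => (hf x).hasDerivWithinAt
  intro s ⟨has, hsb⟩
  rcases le_or_gt s m with hsm | hms
  · have hmono : MonotoneOn f (Icc a m) :=
      monotoneOn_of_hasDerivWithinAt_nonneg (convex_Icc a m) hcont.continuousOn (hderiv _)
        (by simpa only [interior_Icc] using hinc)
    exact hmono ⟨has, hsm⟩ ⟨has.trans hsm, le_rfl⟩ hsm
  · have hanti : AntitoneOn f (Icc m b) :=
      antitoneOn_of_hasDerivWithinAt_nonpos (convex_Icc m b) hcont.continuousOn (hderiv _)
        (by simpa only [interior_Icc] using hdec)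
    exact hanti ⟨le_rfl, hms.le.trans hsb⟩ ⟨hms.le, hsb⟩ hms.le

lemma monotoneOn_mul_exp_mul_one_add {k r T : ℝ} (hk : 0 ≤ k) (hr : 0 ≤ r) :
    MonotoneOn (fun s => k * exp (-r * (T - s)) * (1 + r * s)) (Ici 0) := by
  intro x hx y _ hxy
  have hexp : exp (-r * (T - x)) ≤ exp (-r * (T - y)) := exp_le_exp.2 (by nlinarith)
  have hlin : 1 + r * x ≤ 1 + r * y := by nlinarith
  have hx1 : 0 ≤ 1 + r * x := by nlinarith [mem_Ici.1 hx]
  exact mul_le_mul (mul_le_mul_of_nonneg_left hexp hk) hlin hx1 (by positivity)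

lemma hasDerivAt_switchingGain (r b aT c T t s : ℝ) :
    HasDerivAt (fun s => c * (s - t) - s * b * aT * exp (-r * (T - s)))
      (c - b * aT * exp (-r * (T - s)) * (1 + r * s)) s := by
  have hlin : HasDerivAt (fun s => c * (s - t)) c s := by
    simpa using ((hasDerivAt_id s).sub_const t).const_mul c
  have hexp : HasDerivAt (fun s => exp (-r * (T - s))) (exp (-r * (T - s)) * r) s := by
    have : HasDerivAt (fun s => -r * (T - s)) r s := by
      simpa using ((hasDerivAt_id s).const_sub T).const_mul (-r)
    exact this.exp
  have hcoef : HasDerivAt (fun s => s * b * aT) (b * aT) s := by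
    simpa [mul_assoc] using (hasDerivAt_id s).mul_const (b * aT)
  exact (hlin.sub (hcoef.mul hexp)).congr_deriv (by ring)

theorem florida_optimal_switching_stochastic_general (r b aT c T t t' : ℝ)
    (hr : 0 < r) (hb : 0 < b) (haT : 0 < aT)
    (ht0 : 0 ≤ t) (ht' : 0 ≤ t')
    (hroot : c = b * aT * Real.exp (-r * (T - t')) * (1 + r * t')) :
    ∀ s : ℝ, t ≤ s → s ≤ T →
      c * (s - t) - s * b * aT * Real.exp (-r * (T - s)) ≤
        c * (max (min T t') t - t)
          - max (min T t') t * b * aT * Real.exp (-r * (T - max (min T t') t)) := by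
  have hmono := monotoneOn_mul_exp_mul_one_add (T := T) (mul_pos hb haT).le hr.le
  have hmax : IsMaxOn (fun s => c * (s - t) - s * b * aT * exp (-r * (T - s))) (Icc t T)
      (max (min T t') t) := by
    refine isMaxOn_Icc_of_hasDerivAt_sign (hasDerivAt_switchingGain r b aT c T t)
      (fun x hx => ?_) (fun x hx => ?_)
    · have hxt' : x ≤ t' := hx.2.le.trans (max_min_le_of_lt hx.2 hx.1.le)
      have := hmono (mem_Ici.2 (ht0.trans hx.1.le)) (mem_Ici.2 ht') hxt'
      dsimp only at this
      linarith
    · have ht'x : t' ≤ x := (le_max_min_of_lt hx.1 hx.2.le).trans hx.1.le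
      have := hmono (mem_Ici.2 ht') (mem_Ici.2 (ht'.trans ht'x)) ht'x
      dsimp only at this
      linarith
  exact fun s hts hsT => hmax ⟨hts, hsT⟩

/-- Optimal switching time for the Florida second election option (stochastic
salary, continuous time): with `g(s) = c·(s − t) − s·b·ä·e^{−r(T−s)}` and `t'`
a root of `c = b·ä·e^{−r(T−t')}·(1 + r·t')`, the clamp
`s* = max(min(T, t'), t)` maximizes `g` on `[t,T]`. -/
theorem florida_optimal_switching_stochastic (r b aT c T t t' : ℝ)
    (hr : 0 < r) (hb : 0 < b) (haT : 0 < aT) (hc : 0 < c)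
    (ht0 : 0 ≤ t) (htT : t ≤ T) (ht' : 0 ≤ t')
    (hroot : c = b * aT * Real.exp (-r * (T - t')) * (1 + r * t')) :
    ∀ s : ℝ, t ≤ s → s ≤ T →
      c * (s - t) - s * b * aT * Real.exp (-r * (T - s)) ≤
        c * (max (min T t') t - t)
          - max (min T t') t * b * aT * Real.exp (-r * (T - max (min T t') t)) :=
  florida_optimal_switching_stochastic_general r b aT c T t t' hr hb haT ht0 ht' hroot
end

section
/- Optional sampling identity for the DC wealth process: for every stopping time τ with respect to (F_n) that is bounded by some N ∈ ℕ, E[ e^{−rτ}·W_τ ] = w + E[ Σ_{u=0}^{τ−1} e^{−ru}·c·L_u ]. -/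
open MeasureTheory Real Finset

/-!
Write `M n = e^{-rn} S n` for the discounted price, a positive martingale. Discounting turns
`W` into the wealth `V` obtained by investing `w` and the discounted contributions
`a u = e^{-ru} c L u` in `M`, and `V (n + 1) = (V n + a n) · M (n + 1) / M n`. Since
`E[M (n + 1) / M n | ℱ n] = 1`, the process `V n - ∑_{u<n} a u` is a martingale, starting at `w`;
optional sampling at the bounded stopping time `τ` gives the identity.
-/

namespace MeasureTheory

variable {Ω : Type*} {m0 : MeasurableSpace Ω} {P : Measure Ω} {ℱ : Filtration ℕ m0}

theorem Martingale.integral_stoppedValue_eq_integral_zero {E : Type*} [NormedAddCommGroup E]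
    [NormedSpace ℝ E] [CompleteSpace E] [IsFiniteMeasure P] {f : ℕ → Ω → E}
    (hf : Martingale f ℱ P) {τ : Ω → ℕ∞} (hτ : IsStoppingTime ℱ τ) {N : ℕ}
    (hbdd : ∀ ω, τ ω ≤ N) :
    ∫ ω, stoppedValue f τ ω ∂P = ∫ ω, f 0 ω ∂P := by
  have h := hf.stoppedValue_ae_eq_condExp_of_le hτ (isStoppingTime_const ℱ 0)
    (fun ω => bot_le) hbdd
  rw [IsStoppingTime.measurableSpace_const, stoppedValue_const] at h
  rw [integral_congr_ae h, integral_condExp (ℱ.le 0)]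

theorem Martingale.condExp_div_ae_eq_one {M : ℕ → Ω → ℝ}
    (hM : Martingale M ℱ P) {i j : ℕ} (hij : i ≤ j) (hne : ∀ᵐ ω ∂P, M i ω ≠ 0)
    (hint : Integrable (fun ω => M j ω / M i ω) P) :
    P[fun ω => M j ω / M i ω | ℱ i] =ᵐ[P] 1 := by
  have hquot : (fun ω => M j ω / M i ω) = (M i)⁻¹ * M j := by
    ext ω; exact div_eq_inv_mul _ _
  rw [hquot] at hint ⊢
  have hpull : P[(M i)⁻¹ * M j | ℱ i] =ᵐ[P] (M i)⁻¹ * P[M j | ℱ i] :=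
    condExp_mul_of_stronglyMeasurable_left (hM.stronglyAdapted i).measurable.inv.stronglyMeasurable
      hint (hM.integrable j)
  filter_upwards [hpull, hM.condExp_ae_eq hij, hne] with ω hpull hmart hne
  rw [hpull, Pi.mul_apply, hmart, Pi.inv_apply, inv_mul_cancel₀ hne, Pi.one_apply]

end MeasureTheory

section ReinvestedWealth

variable {Ω : Type*} {m0 : MeasurableSpace Ω} {P : Measure Ω} {ℱ : Filtration ℕ m0}
  {M : ℕ → Ω → ℝ} {w : ℝ} {a : ℕ → ℝ}

/-- The balance at time `n` when `w` and each contribution `a u` paid at time `u < n` are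
invested in an asset with price process `M`. -/
noncomputable def reinvestedWealth (M : ℕ → Ω → ℝ) (w : ℝ) (a : ℕ → ℝ) (n : ℕ) (ω : Ω) : ℝ :=
  w * (M n ω / M 0 ω) + ∑ u ∈ range n, M n ω / M u ω * a u

theorem reinvestedWealth_zero (ω : Ω) (h : M 0 ω ≠ 0) : reinvestedWealth M w a 0 ω = w := by
  simp [reinvestedWealth, h]

theorem reinvestedWealth_succ {n : ℕ} {ω : Ω} (h : M n ω ≠ 0) :
    reinvestedWealth M w a (n + 1) ω
      = (reinvestedWealth M w a n ω + a n) * (M (n + 1) ω / M n ω) := by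
  have hratio : ∀ u, M (n + 1) ω / M u ω = M n ω / M u ω * (M (n + 1) ω / M n ω) :=
    fun u => (div_mul_div_cancel₀' h _ _).symm
  simp only [reinvestedWealth, sum_range_succ, add_mul, sum_mul]
  rw [hratio 0, sum_congr rfl fun u _ => by rw [hratio u, mul_right_comm]]
  ring

theorem reinvestedWealth_discount {d : ℕ → ℝ} (hd0 : d 0 = 1) (hd : ∀ n, d n ≠ 0) (n : ℕ)
    (ω : Ω) :
    reinvestedWealth (fun n ω => d n * M n ω) w (fun u => d u * a u) n ω
      = d n * reinvestedWealth M w a n ω := by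
  simp only [reinvestedWealth, mul_div_mul_comm, hd0, div_one, mul_add, mul_sum]
  congr 1
  · ring
  · refine sum_congr rfl fun u _ => ?_
    field_simp [hd u]

theorem MeasureTheory.StronglyAdapted.reinvestedWealth (hM : StronglyAdapted ℱ M) :
    StronglyAdapted ℱ (reinvestedWealth M w a) := by
  have hratio : ∀ n u, u ≤ n → Measurable[ℱ n] fun ω => M n ω / M u ω := fun n u hun =>
    (hM n).measurable.div ((hM u).mono (ℱ.mono hun)).measurable
  exact fun n => (((hratio n 0 (Nat.zero_le n)).const_mul w).add <| Finset.measurable_sum _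
    fun u hu => (hratio n u (mem_range.1 hu).le).mul_const _).stronglyMeasurable

theorem integrable_reinvestedWealth
    (hint : ∀ u n : ℕ, u ≤ n → Integrable (fun ω => M n ω / M u ω) P) (n : ℕ) :
    Integrable (reinvestedWealth M w a n) P :=
  ((hint 0 n (Nat.zero_le n)).const_mul w).add <| integrable_finsetSum _
    fun u hu => (hint u n (mem_range.1 hu).le).mul_const _

theorem MeasureTheory.Martingale.condExp_reinvestedWealth_succ (hM : Martingale M ℱ P)
    (hne : ∀ n, ∀ᵐ ω ∂P, M n ω ≠ 0)
    (hint : ∀ u n : ℕ, u ≤ n → Integrable (fun ω => M n ω / M u ω) P) (n : ℕ) :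
    P[reinvestedWealth M w a (n + 1) | ℱ n] =ᵐ[P] fun ω => reinvestedWealth M w a n ω + a n := by
  set V := reinvestedWealth M w a
  have hR : Integrable (fun ω => M (n + 1) ω / M n ω) P := hint n (n + 1) n.le_succ
  have hstep : V (n + 1) =ᵐ[P] (fun ω => V n ω + a n) * fun ω => M (n + 1) ω / M n ω := by
    filter_upwards [hne n] with ω h using reinvestedWealth_succ h
  have hmeas : StronglyMeasurable[ℱ n] fun ω => V n ω + a n :=
    (hM.stronglyAdapted.reinvestedWealth n).add stronglyMeasurable_const
  calc P[V (n + 1) | ℱ n] =ᵐ[P] P[(fun ω => V n ω + a n) * fun ω => M (n + 1) ω / M n ω | ℱ n] :=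
        condExp_congr_ae hstep
    _ =ᵐ[P] (fun ω => V n ω + a n) * P[fun ω => M (n + 1) ω / M n ω | ℱ n] :=
        condExp_mul_of_stronglyMeasurable_left hmeas
          ((integrable_reinvestedWealth hint (n + 1)).congr hstep) hR
    _ =ᵐ[P] fun ω => V n ω + a n := by
        filter_upwards [hM.condExp_div_ae_eq_one n.le_succ (hne n) hR] with ω h
        rw [Pi.mul_apply, h, Pi.one_apply, mul_one]

theorem MeasureTheory.Martingale.reinvestedWealth_sub_sum [IsFiniteMeasure P]
    (hM : Martingale M ℱ P) (hne : ∀ n, ∀ᵐ ω ∂P, M n ω ≠ 0)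
    (hint : ∀ u n : ℕ, u ≤ n → Integrable (fun ω => M n ω / M u ω) P) :
    Martingale (fun n ω => reinvestedWealth M w a n ω - ∑ u ∈ range n, a u) ℱ P := by
  set V := reinvestedWealth M w a
  refine martingale_of_condExp_sub_eq_zero_nat
    (fun n => (hM.stronglyAdapted.reinvestedWealth n).sub stronglyMeasurable_const)
    (fun n => (integrable_reinvestedWealth hint n).sub (integrable_const _)) fun n => ?_
  have hincr : (fun ω => V (n + 1) ω - ∑ u ∈ range (n + 1), a u)
      - (fun ω => V n ω - ∑ u ∈ range n, a u) = V (n + 1) - fun ω => V n ω + a n := by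
    ext ω
    simp only [Pi.sub_apply, sum_range_succ]
    ring
  have hVn : Integrable (fun ω => V n ω + a n) P :=
    (integrable_reinvestedWealth hint n).add (integrable_const _)
  have hVn_meas : StronglyMeasurable[ℱ n] fun ω => V n ω + a n :=
    (hM.stronglyAdapted.reinvestedWealth n).add stronglyMeasurable_const
  rw [hincr]
  filter_upwards [condExp_sub (integrable_reinvestedWealth hint (n + 1)) hVn (ℱ n),
    hM.condExp_reinvestedWealth_succ hne hint n] with ω hsub hsucc
  rw [hsub, Pi.sub_apply, hsucc, condExp_of_stronglyMeasurable (ℱ.le n) hVn_meas hVn, sub_self,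
    Pi.zero_apply]

theorem MeasureTheory.Martingale.integral_reinvestedWealth_stoppingTime [IsProbabilityMeasure P]
    (hM : Martingale M ℱ P) (hne : ∀ n, ∀ᵐ ω ∂P, M n ω ≠ 0)
    (hint : ∀ u n : ℕ, u ≤ n → Integrable (fun ω => M n ω / M u ω) P) {τ : Ω → ℕ}
    (hτ : IsStoppingTime ℱ fun ω => (τ ω : ℕ∞)) {N : ℕ} (hbdd : ∀ ω, τ ω ≤ N) :
    ∫ ω, reinvestedWealth M w a (τ ω) ω ∂P = w + ∫ ω, ∑ u ∈ range (τ ω), a u ∂P := by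
  set X : ℕ → Ω → ℝ := fun n ω => reinvestedWealth M w a n ω - ∑ u ∈ range n, a u
  have hX : Martingale X ℱ P := hM.reinvestedWealth_sub_sum hne hint
  have hbdd' : ∀ ω, (τ ω : ℕ∞) ≤ N := fun ω => by exact_mod_cast hbdd ω
  have hXτ_int : Integrable (fun ω => X (τ ω) ω) P :=
    integrable_stoppedValue ℕ hτ hX.integrable hbdd'
  have hsum_int : Integrable (fun ω => ∑ u ∈ range (τ ω), a u) P :=
    integrable_stoppedValue ℕ hτ (fun n => integrable_const (∑ u ∈ range n, a u)) hbdd'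
  have hX0 : X 0 =ᵐ[P] fun _ => w := by
    filter_upwards [hne 0] with ω h
    simp [X, reinvestedWealth_zero ω h]
  calc ∫ ω, reinvestedWealth M w a (τ ω) ω ∂P
      = ∫ ω, X (τ ω) ω ∂P + ∫ ω, ∑ u ∈ range (τ ω), a u ∂P := by
        rw [← integral_add hXτ_int hsum_int]
        simp [X]
    _ = ∫ ω, X 0 ω ∂P + ∫ ω, ∑ u ∈ range (τ ω), a u ∂P := by
        rw [← hX.integral_stoppedValue_eq_integral_zero hτ hbdd']
        rfl
    _ = w + ∫ ω, ∑ u ∈ range (τ ω), a u ∂P := by simp [integral_congr_ae hX0]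

end ReinvestedWealth

theorem optional_sampling_dc_wealth_general
    {Ω : Type*} {m0 : MeasurableSpace Ω} {P : Measure Ω} [IsProbabilityMeasure P]
    (ℱ : Filtration ℕ m0) (r c : ℝ) (L : ℕ → ℝ)
    (S : ℕ → Ω → ℝ)
    (hpos : ∀ n, ∀ᵐ ω ∂P, 0 < S n ω)
    (hmart : Martingale (fun (n : ℕ) (ω : Ω) => Real.exp (-(r * (n : ℝ))) * S n ω) ℱ P)
    (hint : ∀ u n : ℕ, u ≤ n → Integrable (fun ω => S n ω / S u ω) P)
    (w : ℝ)
    (τ : Ω → ℕ) (hτ : IsStoppingTime ℱ (fun ω => (τ ω : WithTop ℕ))) (N : ℕ) (hτN : ∀ ω, τ ω ≤ N) :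
    ∫ ω, Real.exp (-(r * ((τ ω : ℕ) : ℝ))) *
          (w * (S (τ ω) ω / S 0 ω)
            + ∑ u ∈ Finset.range (τ ω), (S (τ ω) ω / S u ω) * (c * L u)) ∂P
      = w + ∫ ω, (∑ u ∈ Finset.range (τ ω), Real.exp (-(r * (u : ℝ))) * (c * L u)) ∂P := by
  have hdiscount : ∀ (n : ℕ) (ω : Ω),
      exp (-(r * n)) * reinvestedWealth S w (fun u => c * L u) n ω
        = reinvestedWealth (fun n ω => exp (-(r * n)) * S n ω) w
            (fun u => exp (-(r * u)) * (c * L u)) n ω := fun n ω =>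
    (reinvestedWealth_discount (d := fun n => exp (-(r * n))) (by simp)
      (fun n => (exp_pos _).ne') n ω).symm
  have hne : ∀ n : ℕ, ∀ᵐ ω ∂P, exp (-(r * n)) * S n ω ≠ 0 := fun n =>
    (hpos n).mono fun ω h => (mul_pos (exp_pos _) h).ne'
  have hint' : ∀ u n : ℕ, u ≤ n → Integrable
      (fun ω => exp (-(r * n)) * S n ω / (exp (-(r * u)) * S u ω)) P := fun u n hun => by
    simpa only [mul_div_mul_comm] using (hint u n hun).const_mul (exp (-(r * n)) / exp (-(r * u)))
  exact (integral_congr_ae (ae_of_all _ fun ω => hdiscount (τ ω) ω)).trans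
    (hmart.integral_reinvestedWealth_stoppingTime hne hint' hτ hτN)

/-- Optional sampling identity for the DC wealth process
`W_n = w·(S_n/S_0) + Σ_{u<n} (S_n/S_u)·c·L_u`: for every stopping time `τ`
bounded by some `N`, `E[e^{−rτ}·W_τ] = w + E[Σ_{u<τ} e^{−ru}·c·L_u]`. -/
theorem optional_sampling_dc_wealth
    {Ω : Type*} {m0 : MeasurableSpace Ω} {P : Measure Ω} [IsProbabilityMeasure P]
    (ℱ : Filtration ℕ m0) (r c : ℝ) (hc : 0 < c) (L : ℕ → ℝ) (hL : ∀ n, 0 < L n)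
    (S : ℕ → Ω → ℝ) (hadapted : Adapted ℱ S)
    (hpos : ∀ n, ∀ᵐ ω ∂P, 0 < S n ω)
    (hmart : Martingale (fun (n : ℕ) (ω : Ω) => Real.exp (-(r * (n : ℝ))) * S n ω) ℱ P)
    (hint : ∀ u n : ℕ, u ≤ n → Integrable (fun ω => S n ω / S u ω) P)
    (w : ℝ) (hw : 0 ≤ w)
    (τ : Ω → ℕ) (hτ : IsStoppingTime ℱ (fun ω => (τ ω : WithTop ℕ))) (N : ℕ) (hτN : ∀ ω, τ ω ≤ N) :
    ∫ ω, Real.exp (-(r * ((τ ω : ℕ) : ℝ))) *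
          (w * (S (τ ω) ω / S 0 ω)
            + ∑ u ∈ Finset.range (τ ω), (S (τ ω) ω / S u ω) * (c * L u)) ∂P
      = w + ∫ ω, (∑ u ∈ Finset.range (τ ω), Real.exp (-(r * (u : ℝ))) * (c * L u)) ∂P :=
  optional_sampling_dc_wealth_general ℱ r c L S hpos hmart hint w τ hτ N hτN
end
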